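/- arXiv:1806.04553 — 6 statements merged into one kernel-verified Lean document; each statement's English description precedes it below -/
import Mathlib

section
/- Let ρ(u), σ(u) be finite families of positive semidefinite operators each with total trace 1. If there exists a family τ(u) of positive semidefinite operators with Σ_u tr(τ(u)) ≥ 1 − ε, τ(u) ≤ ρ(u), and τ(u) ≤ σ(u) for all u, then the total variation distance (1/2) Σ_u tr|ρ(u) − σ(u)| is at most ε. -/
open scoped Matrix BigOperators Classical ComplexOrder

noncomputable section

/-- Real part of the trace of a complex matrix. -/
def rtr {d : ℕ} (M : Matrix (Fin d) (Fin d) ℂ) : ℝ := (Matrix.trace M).re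

/-- Functional calculus applied to a matrix (junk value `0` if the matrix is not Hermitian). -/
def mfun {d : ℕ} (f : ℝ → ℝ) (A : Matrix (Fin d) (Fin d) ℂ) : Matrix (Fin d) (Fin d) ℂ :=
  if h : A.IsHermitian then h.cfc f else 0

/-- Positive part `[A]₊` of a Hermitian matrix. -/
def posPartM {d : ℕ} (A : Matrix (Fin d) (Fin d) ℂ) : Matrix (Fin d) (Fin d) ℂ :=
  mfun (fun x => max x 0) A

/-- Projector onto the support of the positive part of a Hermitian matrix. -/
def posSuppProj {d : ℕ} (A : Matrix (Fin d) (Fin d) ℂ) : Matrix (Fin d) (Fin d) ℂ :=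
  mfun (fun x => if 0 < x then 1 else 0) A

/-- Operator absolute value of a Hermitian matrix. -/
def absM {d : ℕ} (A : Matrix (Fin d) (Fin d) ℂ) : Matrix (Fin d) (Fin d) ℂ :=
  mfun (fun x => |x|) A

/-- Moore–Penrose (relative) power of a Hermitian matrix: `x ↦ x ^ p` on the support,
`0` on the kernel. -/
def mpow {d : ℕ} (A : Matrix (Fin d) (Fin d) ℂ) (p : ℝ) : Matrix (Fin d) (Fin d) ℂ :=
  mfun (fun x => if x = 0 then 0 else x ^ p) A

/-- Support containment: the kernel of `σ` is contained in the kernel of `ρ`,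
i.e. `supp ρ ⊆ supp σ` for positive semidefinite matrices. -/
def suppSubset {d : ℕ} (ρ σ : Matrix (Fin d) (Fin d) ℂ) : Prop :=
  ∀ v : Fin d → ℂ, σ.mulVec v = 0 → ρ.mulVec v = 0

/-- Sandwiched Rényi power `R_α(ρ|σ) = tr((σ^{-β/(2α)} ρ σ^{-β/(2α)})^α)`, `β = α - 1`. -/
def sandR {d : ℕ} (α : ℝ) (ρ σ : Matrix (Fin d) (Fin d) ℂ) : ℝ :=
  rtr (mpow (mpow σ (-(α - 1) / (2 * α)) * ρ * mpow σ (-(α - 1) / (2 * α))) α)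

/-- Petz Rényi power `tr(ρ^α σ^{-β})`, `β = α - 1`. -/
def petzR {d : ℕ} (α : ℝ) (ρ σ : Matrix (Fin d) (Fin d) ℂ) : ℝ :=
  rtr (mpow ρ α * mpow σ (-(α - 1)))

/-! The defects `ρ(u) - τ(u)` and `σ(u) - τ(u)` are positive, each family has total trace
`1 - Σ tr τ(u) ≤ ε`, and `ρ(u) - σ(u)` is their difference. For positive `A`, `B` one has
`tr|A - B| ≤ tr A + tr B`: in an eigenbasis of `A - B` each eigenvalue is the difference of the
nonnegative diagonal entries of `A` and `B`. -/

section

open Matrix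

variable {d : ℕ}

lemma rtr_sub (A B : Matrix (Fin d) (Fin d) ℂ) : rtr (A - B) = rtr A - rtr B := by
  simp [rtr, trace_sub]

lemma rtr_eq_sum_re_diag (A : Matrix (Fin d) (Fin d) ℂ) : rtr A = ∑ i, (A i i).re := by
  simp [rtr, trace, Complex.re_sum]

lemma rtr_star_mul_mul_of_mem_unitaryGroup {U : Matrix (Fin d) (Fin d) ℂ}
    (hU : U ∈ unitaryGroup (Fin d) ℂ) (A : Matrix (Fin d) (Fin d) ℂ) :
    rtr (star U * A * U) = rtr A := by
  rw [rtr, trace_mul_cycle, mem_unitaryGroup_iff.mp hU, one_mul, rtr]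

namespace Matrix.IsHermitian

lemma eigenvalues_eq_re_conj_eigenvectorUnitary_apply {M : Matrix (Fin d) (Fin d) ℂ}
    (hM : M.IsHermitian) (i : Fin d) :
    hM.eigenvalues i = ((star (hM.eigenvectorUnitary : Matrix (Fin d) (Fin d) ℂ) * M *
      hM.eigenvectorUnitary) i i).re := by
  rw [← Unitary.conjStarAlgAut_star_apply (S := ℂ), hM.conjStarAlgAut_star_eigenvectorUnitary]
  simp

lemma rtr_absM_eq_sum_abs_eigenvalues {M : Matrix (Fin d) (Fin d) ℂ} (hM : M.IsHermitian) :
    rtr (absM M) = ∑ i, |hM.eigenvalues i| := by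
  rw [absM, mfun, dif_pos hM, IsHermitian.cfc, Unitary.conjStarAlgAut_apply, rtr,
    trace_mul_cycle, Unitary.coe_star_mul_self, one_mul, trace_diagonal]
  simp [Complex.re_sum]

end Matrix.IsHermitian

lemma Matrix.PosSemidef.rtr_absM_sub_le {A B : Matrix (Fin d) (Fin d) ℂ} (hA : A.PosSemidef)
    (hB : B.PosSemidef) : rtr (absM (A - B)) ≤ rtr A + rtr B := by
  have hM : (A - B).IsHermitian := hA.1.sub hB.1
  have hU := hM.eigenvectorUnitary.2
  set U : Matrix (Fin d) (Fin d) ℂ := (hM.eigenvectorUnitary : Matrix (Fin d) (Fin d) ℂ)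
  have hUA := hA.conjTranspose_mul_mul_same U
  have hUB := hB.conjTranspose_mul_mul_same U
  rw [← star_eq_conjTranspose] at hUA hUB
  calc rtr (absM (A - B))
      = ∑ i, |((star U * A * U) i i).re - ((star U * B * U) i i).re| := by
        simp only [hM.rtr_absM_eq_sum_abs_eigenvalues,
          hM.eigenvalues_eq_re_conj_eigenvectorUnitary_apply, mul_sub, sub_mul, sub_apply,
          Complex.sub_re, U]
    _ ≤ ∑ i, (((star U * A * U) i i).re + ((star U * B * U) i i).re) := by
        gcongr with i
        have ha := (Complex.nonneg_iff.mp (hUA.diag_nonneg (i := i))).1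
        have hb := (Complex.nonneg_iff.mp (hUB.diag_nonneg (i := i))).1
        exact abs_sub_le_iff.2 ⟨by linarith, by linarith⟩
    _ = rtr A + rtr B := by
        rw [Finset.sum_add_distrib, ← rtr_eq_sum_re_diag, ← rtr_eq_sum_re_diag,
          rtr_star_mul_mul_of_mem_unitaryGroup hU, rtr_star_mul_mul_of_mem_unitaryGroup hU]

end

theorem stmt3_general {d : ℕ} {U : Type*} [Fintype U]
    (ρ σ τ : U → Matrix (Fin d) (Fin d) ℂ)
    (hρ1 : ∑ u, rtr (ρ u) = 1) (hσ1 : ∑ u, rtr (σ u) = 1)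
    (ε : ℝ)
    (hτtr : 1 - ε ≤ ∑ u, rtr (τ u))
    (hτρ : ∀ u, (ρ u - τ u).PosSemidef)
    (hτσ : ∀ u, (σ u - τ u).PosSemidef) :
    (1 / 2) * ∑ u, rtr (absM (ρ u - σ u)) ≤ ε := by
  have hdefect : ∑ u, (rtr (ρ u - τ u) + rtr (σ u - τ u)) = 2 * (1 - ∑ u, rtr (τ u)) := by
    simp only [rtr_sub, Finset.sum_add_distrib, Finset.sum_sub_distrib, hρ1, hσ1]
    ring
  have hbound : ∑ u, rtr (absM (ρ u - σ u)) ≤ 2 * (1 - ∑ u, rtr (τ u)) :=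
    hdefect ▸ Finset.sum_le_sum fun u _ => by
      simpa only [sub_sub_sub_cancel_right] using (hτρ u).rtr_absM_sub_le (hτσ u)
  linarith

/-- If a common positive lower bound `τ(u) ≤ ρ(u), σ(u)` has total trace at least `1 - ε`,
then the total variation distance between the normalized families `ρ` and `σ` is at most
`ε`. -/
theorem stmt3 {d : ℕ} {U : Type*} [Fintype U]
    (ρ σ τ : U → Matrix (Fin d) (Fin d) ℂ)
    (hρ : ∀ u, (ρ u).PosSemidef) (hσ : ∀ u, (σ u).PosSemidef)
    (hτ : ∀ u, (τ u).PosSemidef)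
    (hρ1 : ∑ u, rtr (ρ u) = 1) (hσ1 : ∑ u, rtr (σ u) = 1)
    (ε : ℝ) (hε : 0 ≤ ε)
    (hτtr : 1 - ε ≤ ∑ u, rtr (τ u))
    (hτρ : ∀ u, (ρ u - τ u).PosSemidef)
    (hτσ : ∀ u, (σ u - τ u).PosSemidef) :
    (1 / 2) * ∑ u, rtr (absM (ρ u - σ u)) ≤ ε :=
  stmt3_general ρ σ τ hρ1 hσ1 ε hτtr hτρ hτσ
end
end

section
/- Let τ(u,v) be a family of positive semidefinite operators indexed by a finite set U × V with total trace at most 1, and σ(v) a family indexed by V with total trace 1. Suppose τ(u,v) ≤ p·σ(v) for all u,v, and p·|U| ≥ 1. Then there exists a family ρ(u,v) of positive semidefinite operators with total trace exactly 1 such that τ(u,v) ≤ ρ(u,v) ≤ p·σ(v) for all u,v. -/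
open scoped Matrix BigOperators Classical ComplexOrder

noncomputable section

/-!
Take `ρ(u,v)` on the segment from `τ(u,v)` to `p σ(v)`, with one parameter `t ∈ [0,1]` for all
`(u,v)`. Every point of a segment whose endpoints are Loewner-ordered lies between them, and the
total trace moves affinely from `∑ tr τ ≤ 1` to `p |U| ≥ 1`, so some `t` makes it exactly `1`.
-/

open AffineMap Set

section Loewner

variable {n 𝕜 : Type*} [RCLike 𝕜] {A B : Matrix n n 𝕜} {t : ℝ}

lemma Matrix.PosSemidef.lineMap_sub_left (hAB : (B - A).PosSemidef) (ht : 0 ≤ t) :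
    (lineMap A B t - A).PosSemidef := by
  rw [← vsub_eq_sub, lineMap_vsub_left]
  exact hAB.smul ht

lemma Matrix.PosSemidef.sub_lineMap (hAB : (B - A).PosSemidef) (ht : t ≤ 1) :
    (B - lineMap A B t).PosSemidef := by
  rw [← vsub_eq_sub, right_vsub_lineMap]
  exact hAB.smul (sub_nonneg.mpr ht)

lemma Matrix.PosSemidef.lineMap (hA : A.PosSemidef) (hAB : (B - A).PosSemidef) (ht : 0 ≤ t) :
    (lineMap A B t).PosSemidef := by
  simpa using hA.add (hAB.lineMap_sub_left ht)

end Loewner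

lemma rtr_lineMap {d : ℕ} (A B : Matrix (Fin d) (Fin d) ℂ) (t : ℝ) :
    rtr (lineMap A B t) = lineMap (rtr A) (rtr B) t := by
  simp [rtr, lineMap_apply_module, Matrix.trace_add, Matrix.trace_smul]

lemma sum_rtr_lineMap {d : ℕ} {ι : Type*} (s : Finset ι) (A B : ι → Matrix (Fin d) (Fin d) ℂ)
    (t : ℝ) :
    ∑ i ∈ s, rtr (lineMap (A i) (B i) t) =
      lineMap (∑ i ∈ s, rtr (A i)) (∑ i ∈ s, rtr (B i)) t := by
  simp only [rtr_lineMap, lineMap_apply_module (k := ℝ) (V1 := ℝ), Finset.sum_add_distrib,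
    Finset.smul_sum]

lemma exists_lineMap_eq {a b c : ℝ} (hac : a ≤ c) (hcb : c ≤ b) :
    ∃ t ∈ Icc (0 : ℝ) 1, lineMap a b t = c := by
  rw [← mem_image, ← segment_eq_image_lineMap, segment_eq_Icc (hac.trans hcb)]
  exact ⟨hac, hcb⟩

lemma sum_rtr_smul_snd {d : ℕ} {U V : Type*} [Fintype U] [Fintype V]
    (σ : V → Matrix (Fin d) (Fin d) ℂ) (p : ℝ) :
    ∑ x : U × V, rtr ((p : ℂ) • σ x.2) = p * Fintype.card U * ∑ v, rtr (σ v) := by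
  simp [rtr, Fintype.sum_prod_type, Matrix.trace_smul, Finset.mul_sum, mul_assoc, mul_left_comm]

theorem stmt4_general {d : ℕ} {U V : Type*} [Fintype U] [Fintype V]
    (τ : U × V → Matrix (Fin d) (Fin d) ℂ) (σ : V → Matrix (Fin d) (Fin d) ℂ)
    (p : ℝ)
    (hτ : ∀ x, (τ x).PosSemidef)
    (hτtr : ∑ x, rtr (τ x) ≤ 1) (hσtr : ∑ v, rtr (σ v) = 1)
    (hle : ∀ u v, ((p : ℂ) • σ v - τ (u, v)).PosSemidef)
    (hcard : 1 ≤ p * Fintype.card U) :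
    ∃ ρ : U × V → Matrix (Fin d) (Fin d) ℂ,
      (∀ x, (ρ x).PosSemidef) ∧ (∑ x, rtr (ρ x) = 1) ∧
      (∀ u v, (ρ (u, v) - τ (u, v)).PosSemidef) ∧
      (∀ u v, ((p : ℂ) • σ v - ρ (u, v)).PosSemidef) := by
  have hpσtr : ∑ x : U × V, rtr ((p : ℂ) • σ x.2) = p * Fintype.card U := by
    rw [sum_rtr_smul_snd, hσtr, mul_one]
  obtain ⟨t, ⟨ht0, ht1⟩, ht⟩ := exists_lineMap_eq hτtr (hpσtr ▸ hcard)
  refine ⟨fun x => lineMap (τ x) ((p : ℂ) • σ x.2) t, fun x => (hτ x).lineMap (hle x.1 x.2) ht0,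
    ?_, fun u v => (hle u v).lineMap_sub_left ht0, fun u v => (hle u v).sub_lineMap ht1⟩
  rw [sum_rtr_lineMap, ht]

/-- Filling in a subnormalized `τ(u,v) ≤ p σ(v)` to a normalized `ρ(u,v)` with
`τ(u,v) ≤ ρ(u,v) ≤ p σ(v)`, provided `p |U| ≥ 1`. -/
theorem stmt4 {d : ℕ} {U V : Type*} [Fintype U] [Fintype V] [Nonempty U] [Nonempty V]
    (τ : U × V → Matrix (Fin d) (Fin d) ℂ) (σ : V → Matrix (Fin d) (Fin d) ℂ)
    (p : ℝ) (hp : 0 < p)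
    (hτ : ∀ x, (τ x).PosSemidef) (hσ : ∀ v, (σ v).PosSemidef)
    (hτtr : ∑ x, rtr (τ x) ≤ 1) (hσtr : ∑ v, rtr (σ v) = 1)
    (hle : ∀ u v, ((p : ℂ) • σ v - τ (u, v)).PosSemidef)
    (hcard : 1 ≤ p * Fintype.card U) :
    ∃ ρ : U × V → Matrix (Fin d) (Fin d) ℂ,
      (∀ x, (ρ x).PosSemidef) ∧ (∑ x, rtr (ρ x) = 1) ∧
      (∀ u v, (ρ (u, v) - τ (u, v)).PosSemidef) ∧
      (∀ u v, ((p : ℂ) • σ v - ρ (u, v)).PosSemidef) :=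
  stmt4_general τ σ p hτ hτtr hσtr hle hcard
end
end

section
/- Let ρ(c,z) be a normalized classical-quantum state over C×Z and F : C×Z → [0,∞) a function satisfying Σ_{c,z} F(c,z) R_α(ρ(c,z)|ρ(z)) ≤ 1. Fix q ∈ (0,1] and let Φ = {(c,z) : F(c,z) ≥ q^{−β}} and κ = Σ_{(c,z)∈Φ'} tr(ρ(c,z)) for any Φ' ⊆ Φ with κ > 0. Then Σ_{c,z} R_α(ρ(c,z | Φ') | ρ(z)) ≤ q^β / κ^α, where ρ(c,z|Φ') = 1_{Φ'}(c,z) ρ(c,z)/κ. -/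
/-
Since `R_α(·|σ)` is positively homogeneous of degree `α`, conditioning on `Φ'` multiplies each
surviving term by `κ^{-α}` and kills the others. On `Φ'` the weight `F` is at least `q^{-β}`,
so a Markov-type estimate applied to the QEF condition `Σ F R_α ≤ 1` bounds the unweighted sum
of the `R_α(ρ(c,z)|ρ(z))` over `Φ'` by `q^β`.
-/

open scoped Matrix BigOperators Classical ComplexOrder

noncomputable section

lemma mfun_eq_cfc {d : ℕ} {A : Matrix (Fin d) (Fin d) ℂ} (hA : A.IsHermitian)
    (f : ℝ → ℝ) : mfun f A = cfc f A := by
  rw [mfun, dif_pos hA, hA.cfc_eq]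

lemma mfun_isHermitian {d : ℕ} (f : ℝ → ℝ) (A : Matrix (Fin d) (Fin d) ℂ) :
    (mfun f A).IsHermitian := by
  by_cases hA : A.IsHermitian
  · rw [mfun_eq_cfc hA]
    exact cfc_predicate f A
  · rw [mfun, dif_neg hA]
    exact Matrix.isHermitian_zero

lemma rtr_mfun {d : ℕ} {A : Matrix (Fin d) (Fin d) ℂ} (hA : A.IsHermitian) (f : ℝ → ℝ) :
    rtr (mfun f A) = ∑ i, f (hA.eigenvalues i) := by
  rw [mfun, dif_pos hA, rtr, Matrix.IsHermitian.cfc, Unitary.conjStarAlgAut_apply,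
    Matrix.trace_mul_cycle, Unitary.coe_star_mul_self, Matrix.one_mul, Matrix.trace_diagonal]
  simp [Function.comp]

lemma rtr_mfun_nonneg {d : ℕ} {A : Matrix (Fin d) (Fin d) ℂ} (hA : A.PosSemidef)
    {f : ℝ → ℝ} (hf : ∀ x, 0 ≤ x → 0 ≤ f x) : 0 ≤ rtr (mfun f A) := by
  rw [rtr_mfun hA.1]
  exact Finset.sum_nonneg fun i _ => hf _ (hA.eigenvalues_nonneg i)

lemma mfun_zero {d : ℕ} {f : ℝ → ℝ} (hf : f 0 = 0) :
    mfun f (0 : Matrix (Fin d) (Fin d) ℂ) = 0 := by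
  rw [mfun_eq_cfc Matrix.isHermitian_zero, cfc_apply_zero, hf, map_zero]

lemma mpow_smul {d : ℕ} {A : Matrix (Fin d) (Fin d) ℂ} (hA : A.PosSemidef)
    {r : ℝ} (hr : 0 < r) (p : ℝ) : mpow (r • A) p = r ^ p • mpow A p := by
  set f : ℝ → ℝ := fun x => if x = 0 then 0 else x ^ p
  have hf : (spectrum ℝ A).EqOn (fun x => f (r • x)) (fun x => r ^ p * f x) := by
    intro x hx
    have hx0 : 0 ≤ x := by
      rw [hA.1.spectrum_real_eq_range_eigenvalues] at hx
      obtain ⟨i, rfl⟩ := hx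
      exact hA.eigenvalues_nonneg i
    rcases hx0.eq_or_lt with rfl | hx0
    · simp [f]
    · simp [f, hr.ne', hx0.ne', Real.mul_rpow hr.le hx0.le]
  have hrA : (r • A).IsHermitian := (hA.smul hr.le).1
  rw [mpow, mpow, mfun_eq_cfc hrA, mfun_eq_cfc hA.1,
    ← cfc_comp_smul r f A ((A.finite_real_spectrum.image _).continuousOn f)
      hA.1.isSelfAdjoint,
    cfc_congr hf, cfc_const_mul _ f A (A.finite_real_spectrum.continuousOn f)]

lemma rtr_smul {d : ℕ} (r : ℝ) (M : Matrix (Fin d) (Fin d) ℂ) :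
    rtr (r • M) = r * rtr M := by
  rw [rtr, rtr, Matrix.trace_smul, Complex.smul_re, smul_eq_mul]

lemma Matrix.PosSemidef.mpow_mul_mul_mpow {d : ℕ} {ρ : Matrix (Fin d) (Fin d) ℂ}
    (hρ : ρ.PosSemidef) (σ : Matrix (Fin d) (Fin d) ℂ) (p : ℝ) :
    (mpow σ p * ρ * mpow σ p).PosSemidef := by
  have h : (mpow σ p).IsHermitian := mfun_isHermitian _ σ
  simpa only [h.eq] using hρ.mul_mul_conjTranspose_same (mpow σ p)

section sandR

variable {d : ℕ} (α : ℝ)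

lemma sandR_nonneg {ρ : Matrix (Fin d) (Fin d) ℂ} (hρ : ρ.PosSemidef)
    (σ : Matrix (Fin d) (Fin d) ℂ) : 0 ≤ sandR α ρ σ := by
  refine rtr_mfun_nonneg (hρ.mpow_mul_mul_mpow σ _) fun x hx => ?_
  split_ifs
  exacts [le_rfl, Real.rpow_nonneg hx α]

lemma sandR_zero_left (σ : Matrix (Fin d) (Fin d) ℂ) : sandR α 0 σ = 0 := by
  rw [sandR, Matrix.mul_zero, Matrix.zero_mul, mpow, mfun_zero (by simp), rtr,
    Matrix.trace_zero, Complex.zero_re]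

lemma sandR_smul_left {ρ : Matrix (Fin d) (Fin d) ℂ} (hρ : ρ.PosSemidef)
    (σ : Matrix (Fin d) (Fin d) ℂ) {r : ℝ} (hr : 0 < r) :
    sandR α ((r : ℂ) • ρ) σ = r ^ α * sandR α ρ σ := by
  have hS := hρ.mpow_mul_mul_mpow σ (-(α - 1) / (2 * α))
  rw [sandR, sandR, Matrix.mul_smul, Matrix.smul_mul, ← Complex.coe_algebraMap, algebraMap_smul,
    mpow_smul hS hr, rtr_smul]

end sandR

lemma sum_sandR_ite_smul {d : ℕ} {ι : Type*} [Fintype ι] [DecidableEq ι]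
    (α : ℝ) (ρ σ : ι → Matrix (Fin d) (Fin d) ℂ) (s : Finset ι)
    (hρ : ∀ i ∈ s, (ρ i).PosSemidef)
    {r : ℝ} (hr : 0 < r) :
    ∑ i, sandR α (if i ∈ s then (r : ℂ) • ρ i else 0) (σ i)
      = r ^ α * ∑ i ∈ s, sandR α (ρ i) (σ i) := by
  calc ∑ i, sandR α (if i ∈ s then (r : ℂ) • ρ i else 0) (σ i)
      = ∑ i, if i ∈ s then r ^ α * sandR α (ρ i) (σ i) else 0 := by
        refine Finset.sum_congr rfl fun i _ => ?_
        split_ifs with hi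
        exacts [sandR_smul_left α (hρ i hi) _ hr, sandR_zero_left α _]
    _ = r ^ α * ∑ i ∈ s, sandR α (ρ i) (σ i) := by
        rw [Finset.sum_ite_mem, Finset.univ_inter, Finset.mul_sum]

lemma sum_le_inv_of_weighted_sum_le_one {ι : Type*} [Fintype ι] {s : Finset ι}
    {a w : ι → ℝ} {t : ℝ} (ht : 0 < t) (ha : ∀ i, 0 ≤ a i) (hw : ∀ i, 0 ≤ w i)
    (hs : ∀ i ∈ s, t ≤ w i) (h : ∑ i, w i * a i ≤ 1) : ∑ i ∈ s, a i ≤ t⁻¹ := by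
  rw [← one_div, le_div_iff₀' ht]
  calc t * ∑ i ∈ s, a i = ∑ i ∈ s, t * a i := Finset.mul_sum _ _ _
    _ ≤ ∑ i ∈ s, w i * a i := Finset.sum_le_sum fun i hi => by gcongr; exacts [ha i, hs i hi]
    _ ≤ ∑ i, w i * a i :=
        Finset.sum_le_sum_of_subset_of_nonneg s.subset_univ fun i _ _ => mul_nonneg (hw i) (ha i)
    _ ≤ 1 := h

theorem stmt10_general {d : ℕ} {C Z : Type*} [Fintype C] [Fintype Z]
    (ρ : C × Z → Matrix (Fin d) (Fin d) ℂ) (hρ : ∀ p, (ρ p).PosSemidef)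
    (α : ℝ)
    (F : C × Z → ℝ) (hF : ∀ p, 0 ≤ F p)
    (hqef : ∑ p, F p * sandR α (ρ p) (∑ c, ρ (c, p.2)) ≤ 1)
    (q : ℝ) (hq0 : 0 < q)
    (Φ' : Finset (C × Z)) (hΦ' : ∀ p ∈ Φ', q ^ (-(α - 1)) ≤ F p)
    (hκ : 0 < ∑ p ∈ Φ', rtr (ρ p)) :
    ∑ p : C × Z,
        sandR α (if p ∈ Φ' then (((∑ p' ∈ Φ', rtr (ρ p'))⁻¹ : ℝ) : ℂ) • ρ p else 0)
          (∑ c, ρ (c, p.2))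
      ≤ q ^ (α - 1) / (∑ p ∈ Φ', rtr (ρ p)) ^ α := by
  set κ := ∑ p ∈ Φ', rtr (ρ p)
  have hΦ'_sum : ∑ p ∈ Φ', sandR α (ρ p) (∑ c, ρ (c, p.2)) ≤ q ^ (α - 1) := by
    simpa only [Real.rpow_neg hq0.le, inv_inv] using
      sum_le_inv_of_weighted_sum_le_one (Real.rpow_pos_of_pos hq0 _)
        (fun p => sandR_nonneg α (hρ p) _) hF hΦ' hqef
  rw [sum_sandR_ite_smul α ρ (fun p => ∑ c, ρ (c, p.2)) Φ' (fun p _ => hρ p) (inv_pos.2 hκ)]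
  calc κ⁻¹ ^ α * ∑ p ∈ Φ', sandR α (ρ p) (∑ c, ρ (c, p.2))
    _ ≤ κ⁻¹ ^ α * q ^ (α - 1) := by gcongr
    _ = q ^ (α - 1) / κ ^ α := by rw [Real.inv_rpow hκ.le, inv_mul_eq_div]

/-- Conditional Rényi power bound from a QEF: conditioning a normalized cq state on a
high-QEF event `Φ' ⊆ {F ≥ q^{-β}}` of probability `κ` gives
`Σ R_α(ρ(c,z|Φ')|ρ(z)) ≤ q^β / κ^α`. -/
theorem stmt10 {d : ℕ} {C Z : Type*} [Fintype C] [Fintype Z]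
    (ρ : C × Z → Matrix (Fin d) (Fin d) ℂ) (hρ : ∀ p, (ρ p).PosSemidef)
    (hnorm : ∑ p, rtr (ρ p) = 1)
    (α : ℝ) (hα : 1 < α)
    (F : C × Z → ℝ) (hF : ∀ p, 0 ≤ F p)
    (hqef : ∑ p, F p * sandR α (ρ p) (∑ c, ρ (c, p.2)) ≤ 1)
    (q : ℝ) (hq0 : 0 < q) (hq1 : q ≤ 1)
    (Φ' : Finset (C × Z)) (hΦ' : ∀ p ∈ Φ', q ^ (-(α - 1)) ≤ F p)
    (hκ : 0 < ∑ p ∈ Φ', rtr (ρ p)) :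
    ∑ p : C × Z,
        sandR α (if p ∈ Φ' then (((∑ p' ∈ Φ', rtr (ρ p'))⁻¹ : ℝ) : ℂ) • ρ p else 0)
          (∑ c, ρ (c, p.2))
      ≤ q ^ (α - 1) / (∑ p ∈ Φ', rtr (ρ p)) ^ α :=
  stmt10_general ρ hρ α F hF hqef q hq0 Φ' hΦ' hκ
end
end

section
/- The function v(x) = x²·(2/3 + (1/3)e^x) is convex on all of ℝ. -/
noncomputable section

private lemma hd1 (x : ℝ) : HasDerivAt (fun x : ℝ => x ^ 2 * (2 / 3 + Real.exp x / 3))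
    (4 / 3 * x + (2 * x + x ^ 2) * Real.exp x / 3) x := by
  have h : HasDerivAt (fun x : ℝ => x ^ 2 * (2 / 3 + Real.exp x / 3))
      ((2 * x) * (2 / 3 + Real.exp x / 3) + x ^ 2 * (Real.exp x / 3)) x := by
    exact (hasDerivAt_pow 2 x).mul (((Real.hasDerivAt_exp x).div_const 3).const_add _) |>.congr_deriv (by ring_nf)
  convert h using 1; ring

private lemma hd2 (x : ℝ) : HasDerivAt (fun x : ℝ => 4 / 3 * x + (2 * x + x ^ 2) * Real.exp x / 3)
    (4 / 3 + (2 + 4 * x + x ^ 2) * Real.exp x / 3) x := by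
  have h : HasDerivAt (fun x : ℝ => 4 / 3 * x + (2 * x + x ^ 2) * Real.exp x / 3)
      (4 / 3 * 1 + ((2 + 2 * x) * Real.exp x + (2 * x + x ^ 2) * Real.exp x) / 3) x := by
    exact ((hasDerivAt_id x).const_mul (4/3)).add
      ((((hasDerivAt_id x).const_mul 2 |>.add (hasDerivAt_pow 2 x)).congr_deriv (by ring)).mul
        (Real.hasDerivAt_exp x) |>.div_const 3)
  convert h using 1; ring

/-- The function `v(x) = x² (2/3 + eˣ/3)` is convex on all of `ℝ`. -/
theorem stmt16 : ConvexOn ℝ Set.univ (fun x : ℝ => x ^ 2 * (2 / 3 + Real.exp x / 3)) := by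
  have e1 : deriv (fun x : ℝ => x ^ 2 * (2 / 3 + Real.exp x / 3))
      = fun x => 4 / 3 * x + (2 * x + x ^ 2) * Real.exp x / 3 := funext fun x => (hd1 x).deriv
  apply convexOn_of_deriv2_nonneg convex_univ
  · exact Continuous.continuousOn (by continuity)
  · exact fun x _ => (hd1 x).differentiableAt.differentiableWithinAt
  · rw [e1]; exact fun x _ => (hd2 x).differentiableAt.differentiableWithinAt
  · intro x _
    have : deriv^[2] (fun x : ℝ => x ^ 2 * (2 / 3 + Real.exp x / 3)) x
        = 4 / 3 + (2 + 4 * x + x ^ 2) * Real.exp x / 3 := by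
      simp only [Function.iterate_succ, Function.iterate_zero, Function.comp_apply, id_eq, e1]
      exact (hd2 x).deriv
    rw [this]
    have hex : Real.exp x > 0 := Real.exp_pos x
    rcases le_or_gt 0 (2 + 4 * x + x ^ 2) with h | h
    · positivity
    · have hx : x ≤ 0 := by nlinarith
      have : Real.exp x ≤ 1 := Real.exp_le_one_iff.mpr hx
      nlinarith [sq_nonneg (x + 2)]
end
end

section
/- For each v ≥ 0, the minimum of 2·cosh(v)·a₁ + a₀ over a₁, a₀ ≥ 0 subject to the constraint 2·cosh(s)·a₁ + a₀ ≥ s² for all real s is at most ⌈v⌉₀², where ⌈v⌉₀ = max(ι₀, v) and ι₀ > 0 is the unique positive solution of 2·coth(x) = x. Specifically, the choice a₁ = ⌈v⌉₀·csch(⌈v⌉₀) and a₀ = max(0, v(v − 2coth(v))) is feasible and achieves objective value at most ⌈v⌉₀². -/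
/-!
With `m = max ι₀ v`, the function `g s = 2 m cosh s - s² sinh m` has derivative
`2 (m sinh s - s sinh m)`, which has the sign of `s - m` on `s ≥ 0` because `sinh x / x` is
increasing (`sinh` is convex with `sinh 0 = 0`). Hence the even function `g` is minimal at `±m`,
which is exactly feasibility of `a₁ = m / sinh m`, `a₀ = m (m - 2 coth m)`. Since `coth` is
decreasing on `(0, ∞)`, the sign of `v - 2 coth v` is that of `v - ι₀`, so `a₀` is the given
`max 0 (v (v - 2 coth v))`, and the objective is `m² - 2 m (cosh m - cosh v) / sinh m ≤ m²`.
-/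

open Set

namespace Real

lemma convexOn_sinh_Ici : ConvexOn ℝ (Ici 0) sinh := by
  refine MonotoneOn.convexOn_of_deriv (convex_Ici 0) continuous_sinh.continuousOn
    differentiable_sinh.differentiableOn ?_
  rw [deriv_sinh, interior_Ici]
  intro x hx y hy hxy
  exact cosh_le_cosh.2 (by rwa [abs_of_pos hx, abs_of_pos hy])

lemma mul_sinh_le_mul_sinh {x y : ℝ} (hx : 0 < x) (hxy : x ≤ y) : y * sinh x ≤ x * sinh y := by
  have hy : 0 < y := hx.trans_le hxy
  have h := convexOn_sinh_Ici.secant_mono self_mem_Ici hx.le hy.le hx.ne' hy.ne' hxy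
  simp only [sinh_zero, sub_zero] at h
  rw [div_le_div_iff₀ hx hy] at h
  linarith

lemma isMinOn_two_mul_cosh_sub_sq_mul_sinh {m : ℝ} (hm : 0 < m) :
    IsMinOn (fun s ↦ 2 * m * cosh s - s ^ 2 * sinh m) univ m := by
  set g : ℝ → ℝ := fun s ↦ 2 * m * cosh s - s ^ 2 * sinh m
  have hg : ∀ s, HasDerivAt g (2 * (m * sinh s - s * sinh m)) s := fun s ↦
    (((hasDerivAt_cosh s).const_mul (2 * m)).sub
      ((hasDerivAt_pow 2 s).mul_const (sinh m))).congr_deriv (by push_cast; ring)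
  have hg_cont : Continuous g := by fun_prop
  have hg_anti : AntitoneOn g (Icc 0 m) := by
    refine antitoneOn_of_hasDerivWithinAt_nonpos (convex_Icc 0 m) hg_cont.continuousOn
      (fun s _ ↦ (hg s).hasDerivWithinAt) fun s hs ↦ ?_
    rw [interior_Icc] at hs
    linarith [mul_sinh_le_mul_sinh hs.1 hs.2.le]
  have hg_mono : MonotoneOn g (Ici m) := by
    refine monotoneOn_of_hasDerivWithinAt_nonneg (convex_Ici m) hg_cont.continuousOn
      (fun s _ ↦ (hg s).hasDerivWithinAt) fun s hs ↦ ?_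
    rw [interior_Ici] at hs
    linarith [mul_sinh_le_mul_sinh hm hs.le]
  have hg_even : ∀ s, g (-s) = g s := fun s ↦ by simp only [g, cosh_neg, neg_sq]
  have hmin_nonneg : ∀ s, 0 ≤ s → g m ≤ g s := fun s hs ↦ by
    rcases le_total s m with hsm | hms
    · exact hg_anti ⟨hs, hsm⟩ ⟨hm.le, le_rfl⟩ hsm
    · exact hg_mono self_mem_Ici hms hms
  intro s _
  rcases le_total 0 s with hs | hs
  · exact hmin_nonneg s hs
  · rw [mem_ofPred_eq, ← hg_even s]
    exact hmin_nonneg (-s) (by linarith)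

lemma sq_le_two_mul_cosh_mul_div_sinh_add {m : ℝ} (hm : 0 < m) (s : ℝ) :
    s ^ 2 ≤ 2 * cosh s * (m / sinh m) + m * (m - 2 * (cosh m / sinh m)) := by
  have hmin := isMinOn_two_mul_cosh_sub_sq_mul_sinh hm (mem_univ s)
  have hsinh : 0 < sinh m := sinh_pos_iff.2 hm
  simp only [mem_ofPred_eq] at hmin
  rw [← sub_nonneg]
  have key : 2 * cosh s * (m / sinh m) + m * (m - 2 * (cosh m / sinh m)) - s ^ 2 =
      ((2 * m * cosh s - s ^ 2 * sinh m) - (2 * m * cosh m - m ^ 2 * sinh m)) / sinh m := by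
    field_simp
    ring
  rw [key]
  exact div_nonneg (by linarith) hsinh.le

lemma monotone_tanh : Monotone tanh := fun x y hxy ↦ by
  by_contra! h
  have := artanh_lt_artanh (neg_one_lt_tanh y) (tanh_lt_one x) h
  rw [artanh_tanh, artanh_tanh] at this
  linarith

lemma antitoneOn_cosh_div_sinh : AntitoneOn (fun x ↦ cosh x / sinh x) (Ioi 0) := by
  intro x hx y _ hxy
  dsimp only
  have htanh : 0 < tanh x := by
    rw [tanh_eq_sinh_div_cosh]
    exact div_pos (sinh_pos_iff.2 hx) (cosh_pos x)
  rw [← inv_div (sinh y), ← inv_div (sinh x), ← tanh_eq_sinh_div_cosh, ← tanh_eq_sinh_div_cosh]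
  exact inv_anti₀ htanh (monotone_tanh hxy)

end Real

open Real

lemma max_zero_mul_sub_two_mul_coth_eq {ι₀ : ℝ} (hι₀pos : 0 < ι₀)
    (hι₀ : 2 * (cosh ι₀ / sinh ι₀) = ι₀) {v : ℝ} (hv : 0 ≤ v) :
    max 0 (v * (v - 2 * (cosh v / sinh v))) =
      max ι₀ v * (max ι₀ v - 2 * (cosh (max ι₀ v) / sinh (max ι₀ v))) := by
  rcases le_total v ι₀ with hvι | hιv
  · rw [max_eq_left hvι, hι₀, sub_self, mul_zero, max_eq_left_iff]
    rcases hv.eq_or_lt with rfl | hv_pos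
    · simp
    · have := antitoneOn_cosh_div_sinh hv_pos hι₀pos hvι
      exact mul_nonpos_of_nonneg_of_nonpos hv (by simp only at this; linarith)
  · rw [max_eq_right hιv, max_eq_right_iff]
    have := antitoneOn_cosh_div_sinh hι₀pos (hι₀pos.trans_le hιv) hιv
    exact mul_nonneg hv (by simp only at this; linarith)

/-- The choice `a₁ = ⌈v⌉₀ csch ⌈v⌉₀`, `a₀ = max(0, v(v - 2 coth v))` is feasible for the
constraint `2 cosh(s) a₁ + a₀ ≥ s²` (for all real `s`) and achieves objective value
`2 cosh(v) a₁ + a₀ ≤ ⌈v⌉₀²`, where `⌈v⌉₀ = max(ι₀, v)` and `ι₀ > 0` solves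
`2 coth(ι₀) = ι₀`. -/
theorem stmt17 (ι₀ : ℝ) (hι₀pos : 0 < ι₀)
    (hι₀ : 2 * (Real.cosh ι₀ / Real.sinh ι₀) = ι₀)
    (v : ℝ) (hv : 0 ≤ v) :
    0 ≤ max ι₀ v / Real.sinh (max ι₀ v) ∧
    0 ≤ max 0 (v * (v - 2 * (Real.cosh v / Real.sinh v))) ∧
    (∀ s : ℝ, s ^ 2 ≤ 2 * Real.cosh s * (max ι₀ v / Real.sinh (max ι₀ v)) +
        max 0 (v * (v - 2 * (Real.cosh v / Real.sinh v)))) ∧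
    2 * Real.cosh v * (max ι₀ v / Real.sinh (max ι₀ v)) +
        max 0 (v * (v - 2 * (Real.cosh v / Real.sinh v)))
      ≤ (max ι₀ v) ^ 2 := by
  have hm : 0 < max ι₀ v := hι₀pos.trans_le (le_max_left ι₀ v)
  have hsinh : 0 < sinh (max ι₀ v) := sinh_pos_iff.2 hm
  refine ⟨div_nonneg hm.le hsinh.le, le_max_left _ _, ?_⟩
  rw [max_zero_mul_sub_two_mul_coth_eq hι₀pos hι₀ hv]
  refine ⟨sq_le_two_mul_cosh_mul_div_sinh_add hm, ?_⟩
  set m := max ι₀ v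
  have hcosh : cosh v ≤ cosh m := cosh_le_cosh.2 <| by
    rw [abs_of_nonneg hv, abs_of_pos hm]
    exact le_max_right ι₀ v
  have hobj : 2 * cosh v * (m / sinh m) + m * (m - 2 * (cosh m / sinh m)) =
      m ^ 2 - 2 * m * (cosh m - cosh v) / sinh m := by
    field_simp
    ring
  rw [hobj, sub_le_self_iff]
  exact div_nonneg (mul_nonneg (by positivity) (sub_nonneg.2 hcosh)) hsinh.le
end

section
/- Let ε ∈ (0,1) and let {x_i}_{i∈I} be a finite family of real unit vectors with ⟨x_i, x_j⟩ ≥ 1 − ε for all i, j. If y is a unit vector that is a nonnegative linear combination of the x_i, then there is a convex combination ρ of the rank-one matrices x_i x_iᵀ such that y yᵀ ≤ ρ/(1 − ε) in the positive semidefinite order. -/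
/-! With `dᵢ = ⟨xᵢ, y⟩ ≥ (1 - ε) ∑ c` and weights `μᵢ = cᵢ / dᵢ`, the matrix `ρ = ∑ μᵢ xᵢxᵢᵀ`
satisfies `ρ y = ∑ cᵢ xᵢ = y`, so it dominates `y yᵀ`, while `∑ μᵢ ≤ 1 / (1 - ε)`.
Normalising `μ` to a probability vector gives the convex combination. -/

namespace Matrix

variable {n ι : Type*}

theorem posSemidef_vecMulVec_self [Finite n] (a : n → ℝ) : (vecMulVec a a).PosSemidef := by
  simpa using posSemidef_vecMulVec_self_star a

theorem PosSemidef.smul_sub_of_one_le {ρ Y : Matrix n n ℝ} (hρ : ρ.PosSemidef)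
    (hρY : (ρ - Y).PosSemidef) {t : ℝ} (ht : 1 ≤ t) : (t • ρ - Y).PosSemidef := by
  have : t • ρ - Y = (t - 1) • ρ + (ρ - Y) := by rw [sub_smul, one_smul]; abel
  exact this ▸ (hρ.smul (sub_nonneg.2 ht)).add hρY

section Weights

variable [Fintype ι]

theorem posSemidef_sum_smul {X : ι → Matrix n n ℝ} (hX : ∀ i, (X i).PosSemidef) {μ : ι → ℝ}
    (hμ : ∀ i, 0 ≤ μ i) : (∑ i, μ i • X i).PosSemidef :=
  posSemidef_sum Finset.univ fun i _ => (hX i).smul (hμ i)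

theorem exists_convex_smul_sum_sub_posSemidef {X : ι → Matrix n n ℝ}
    (hX : ∀ i, (X i).PosSemidef) {Y : Matrix n n ℝ} {μ : ι → ℝ} (hμ : ∀ i, 0 ≤ μ i) {s : ℝ}
    (hpos : 0 < ∑ i, μ i) (hle : ∑ i, μ i ≤ s) (hY : (∑ i, μ i • X i - Y).PosSemidef) :
    ∃ lam : ι → ℝ, (∀ i, 0 ≤ lam i) ∧ ∑ i, lam i = 1 ∧
      (s • ∑ i, lam i • X i - Y).PosSemidef := by
  refine ⟨fun i => μ i / ∑ j, μ j, fun i => div_nonneg (hμ i) hpos.le, ?_, ?_⟩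
  · rw [← Finset.sum_div, div_self hpos.ne']
  · have hrescale : s • ∑ i, (μ i / ∑ j, μ j) • X i = (s / ∑ j, μ j) • ∑ i, μ i • X i := by
      simp only [Finset.smul_sum, smul_smul]
      congr 1; ext1 i; congr 1; ring
    rw [hrescale]
    exact (posSemidef_sum_smul hX hμ).smul_sub_of_one_le hY ((one_le_div hpos).2 hle)

theorem sum_div_le_inv_of_mul_sum_le {c d : ι → ℝ} {a : ℝ} (hc : ∀ i, 0 ≤ c i)
    (ha : 0 < a) (hS : 0 < ∑ i, c i) (hd : ∀ i, a * ∑ j, c j ≤ d i) :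
    ∑ i, c i / d i ≤ a⁻¹ :=
  calc ∑ i, c i / d i ≤ ∑ i, c i / (a * ∑ j, c j) :=
        Finset.sum_le_sum fun i _ => div_le_div_of_nonneg_left (hc i) (mul_pos ha hS) (hd i)
    _ = a⁻¹ := by rw [← Finset.sum_div]; field_simp

end Weights

variable [Fintype n]

theorem posSemidef_sub_vecMulVec_of_mulVec_eq_self {ρ : Matrix n n ℝ} (hρ : ρ.PosSemidef)
    {y : n → ℝ} (hρy : ρ *ᵥ y = y) (hy : y ⬝ᵥ y = 1) :
    (ρ - vecMulVec y y).PosSemidef := by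
  have hyρ : y ᵥ* ρ = y := by
    rw [← mulVec_transpose, ← conjTranspose_eq_transpose_of_trivial, hρ.isHermitian.eq, hρy]
  refine .of_dotProduct_mulVec_nonneg
    (hρ.isHermitian.sub (posSemidef_vecMulVec_self y).isHermitian) fun v => ?_
  -- The quadratic form of `ρ` at `v - ⟨y, v⟩ y` equals `⟨v, ρ v⟩ - ⟨y, v⟩²`.
  have key := hρ.dotProduct_mulVec_nonneg (v - (y ⬝ᵥ v) • y)
  simp only [star_trivial, mulVec_sub, mulVec_smul, hρy, sub_mulVec, vecMulVec_mulVec,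
    dotProduct_sub, sub_dotProduct, dotProduct_smul, smul_dotProduct, smul_eq_mul,
    op_smul_eq_smul, hy] at key ⊢
  rw [dotProduct_mulVec y, hyρ, dotProduct_comm v y] at key
  rw [dotProduct_comm v y]
  linarith

variable [Fintype ι]

theorem sum_smul_vecMulVec_mulVec (μ : ι → ℝ) (x : ι → n → ℝ) (y : n → ℝ) :
    (∑ i, μ i • vecMulVec (x i) (x i)) *ᵥ y = ∑ i, (μ i * (x i ⬝ᵥ y)) • x i := by
  simp only [sum_mulVec, smul_mulVec, vecMulVec_mulVec, op_smul_eq_smul, smul_smul]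

theorem mul_sum_le_dotProduct_sum_smul {x : ι → n → ℝ} {c : ι → ℝ} {a : ℝ}
    (hc : ∀ i, 0 ≤ c i) (hx : ∀ i j, a ≤ x i ⬝ᵥ x j) (i : ι) :
    a * ∑ j, c j ≤ x i ⬝ᵥ ∑ j, c j • x j := by
  rw [Finset.mul_sum, dotProduct_sum]
  refine Finset.sum_le_sum fun j _ => ?_
  rw [dotProduct_smul, smul_eq_mul, mul_comm a]
  exact mul_le_mul_of_nonneg_left (hx i j) (hc j)

end Matrix

open Matrix in
theorem stmt18_general {dm : ℕ} {ι : Type*} [Fintype ι] (ε : ℝ) (hε1 : ε < 1)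
    (x : ι → (Fin dm → ℝ))
    (hdot : ∀ i j, 1 - ε ≤ ∑ k, x i k * x j k)
    (y : Fin dm → ℝ) (hy : ∑ k, y k ^ 2 = 1)
    (c : ι → ℝ) (hc : ∀ i, 0 ≤ c i) (hyc : y = ∑ i, c i • x i) :
    ∃ lam : ι → ℝ, (∀ i, 0 ≤ lam i) ∧ (∑ i, lam i = 1) ∧
      ((1 - ε)⁻¹ • (∑ i, lam i • Matrix.vecMulVec (x i) (x i)) -
        Matrix.vecMulVec y y).PosSemidef := by
  have hε : 0 < 1 - ε := by linarith
  have hyy : y ⬝ᵥ y = 1 := by simpa [dotProduct, sq] using hy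
  have hS : 0 < ∑ i, c i := by
    refine (Finset.sum_nonneg fun i _ => hc i).lt_of_ne fun h => ?_
    have hc0 : ∀ i, c i = 0 := fun i =>
      (Finset.sum_eq_zero_iff_of_nonneg fun i _ => hc i).1 h.symm i (Finset.mem_univ i)
    simp [hyc, hc0] at hyy
  have hd_ge : ∀ i, (1 - ε) * ∑ j, c j ≤ x i ⬝ᵥ y :=
    fun i => hyc ▸ mul_sum_le_dotProduct_sum_smul hc hdot i
  have hd : ∀ i, 0 < x i ⬝ᵥ y := fun i => (mul_pos hε hS).trans_le (hd_ge i)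
  set μ : ι → ℝ := fun i => c i / (x i ⬝ᵥ y)
  have hμ : ∀ i, 0 ≤ μ i := fun i => div_nonneg (hc i) (hd i).le
  have hρy : (∑ i, μ i • vecMulVec (x i) (x i)) *ᵥ y = y := by
    rw [sum_smul_vecMulVec_mulVec]
    simp_rw [μ, div_mul_cancel₀ _ (hd _).ne']
    exact hyc.symm
  obtain ⟨i, -, hi⟩ := Finset.exists_lt_of_sum_lt (by simpa using hS : ∑ _ : ι, (0 : ℝ) < ∑ i, c i)
  exact exists_convex_smul_sum_sub_posSemidef (fun i => posSemidef_vecMulVec_self (x i)) hμ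
    (Finset.sum_pos' (fun i _ => hμ i) ⟨i, Finset.mem_univ i, div_pos hi (hd i)⟩)
    (sum_div_le_inv_of_mul_sum_le hc hε hS hd_ge)
    (posSemidef_sub_vecMulVec_of_mulVec_eq_self
      (posSemidef_sum_smul (fun i => posSemidef_vecMulVec_self (x i)) hμ) hρy hyy)

/-- If unit vectors `x_i` pairwise satisfy `⟨x_i, x_j⟩ ≥ 1 - ε` and the unit vector `y`
is a nonnegative combination of the `x_i`, then some convex combination `ρ` of the
`x_i x_iᵀ` satisfies `y yᵀ ≤ ρ / (1 - ε)`. -/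
theorem stmt18 {dm : ℕ} {ι : Type*} [Fintype ι] (ε : ℝ) (hε0 : 0 < ε) (hε1 : ε < 1)
    (x : ι → (Fin dm → ℝ)) (hx : ∀ i, ∑ k, x i k ^ 2 = 1)
    (hdot : ∀ i j, 1 - ε ≤ ∑ k, x i k * x j k)
    (y : Fin dm → ℝ) (hy : ∑ k, y k ^ 2 = 1)
    (c : ι → ℝ) (hc : ∀ i, 0 ≤ c i) (hyc : y = ∑ i, c i • x i) :
    ∃ lam : ι → ℝ, (∀ i, 0 ≤ lam i) ∧ (∑ i, lam i = 1) ∧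
      ((1 - ε)⁻¹ • (∑ i, lam i • Matrix.vecMulVec (x i) (x i)) -
        Matrix.vecMulVec y y).PosSemidef :=
  stmt18_general ε hε1 x hdot y hy c hc hyc
end
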